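/- The number of Fishburn permutations of size n avoiding the classical pattern 312 is 2^{n-1} for all n ≥ 1. -/
import Mathlib

def Drop1 (n : ℕ) (f : ℕ → ℕ) : Prop := ∀ i, i + 1 < n → f i ≤ f (i+1) + 1

lemma ivt {n : ℕ} {f : ℕ → ℕ} (hd : Drop1 n f) {a v : ℕ} (h2 : v ≤ f a) :
    ∀ c, a ≤ c → c < n → f c ≤ v → ∃ j, a ≤ j ∧ j ≤ c ∧ f j = v := by
  intro c hac
  induction c, hac using Nat.le_induction with
  | base => exact fun _ h1 => ⟨a, le_refl a, le_refl a, le_antisymm h1 h2⟩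
  | succ c hac ih =>
    intro hc h1
    by_cases hfc : f c ≤ v
    · obtain ⟨j, h⟩ := ih (by omega) hfc
      exact ⟨j, h.1, by omega, h.2.2⟩
    · have := hd c (by omega)
      exact ⟨c+1, by omega, le_refl _, by omega⟩

lemma prefix_surj {f : ℕ → ℕ} {m : ℕ} (hbd : ∀ i, i < m → f i < m)
    (hinj : ∀ i, i < m → ∀ j, j < m → f i = f j → i = j) :
    ∀ v, v < m → ∃ c, c < m ∧ f c = v := by
  intro v hv
  have hI : Function.Injective (fun i : Fin m => (⟨f i, hbd i i.2⟩ : Fin m)) := by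
    intro i j h
    exact Fin.ext (hinj i i.2 j j.2 (by simpa using congrArg Fin.val h))
  obtain ⟨c, hc⟩ := (Finite.injective_iff_surjective.mp hI) ⟨v, hv⟩
  exact ⟨c, c.2, congrArg Fin.val hc⟩

lemma run_formula {n : ℕ} {f : ℕ → ℕ} (hd : Drop1 n f) {e : ℕ} (he : e < n) :
    ∀ k i, i + k = e → (∀ t, i ≤ t → t < e → f (t+1) < f t) → f i = f e + k := by
  intro k
  induction k with
  | zero => intro i hi _; have : i = e := by omega
            subst this; omega
  | succ k ih =>
    intro i hi hrun
    have h1 : f (i+1) < f i := hrun i le_rfl (by omega)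
    have h2 : f i ≤ f (i+1) + 1 := hd i (by omega)
    have h3 : f (i+1) = f e + k := ih (i+1) (by omega) (fun t ht1 ht2 => hrun t (by omega) ht2)
    omega

lemma main_lem {n : ℕ} {f : ℕ → ℕ} (hd : Drop1 n f)
    (hbd : ∀ i, i < n → f i < n)
    (hinj : ∀ i, i < n → ∀ j, j < n → f i = f j → i = j) :
    ∀ e, e < n → (e + 1 = n ∨ f e < f (e+1)) →
      ∃ s, s ≤ e ∧ f e = s ∧ (∀ t, s ≤ t → t < e → f (t+1) < f t) ∧
        (s = 0 ∨ f (s-1) < f s) ∧ (∀ j, j ≤ e → f j ≤ e) := by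
  intro e
  induction e using Nat.strong_induction_on with
  | _ e IH =>
    intro he hre
    have hex : ∃ s, ∀ t, s ≤ t → t < e → f (t+1) < f t :=
      ⟨e, fun t h1 h2 => absurd h2 (by omega)⟩
    set s := Nat.find hex with hs_def
    have hrun : ∀ t, s ≤ t → t < e → f (t+1) < f t := Nat.find_spec hex
    have hsle : s ≤ e := Nat.find_le (fun t h1 h2 => absurd h2 (by omega))
    have hasc : s = 0 ∨ f (s-1) < f s := by
      rcases Nat.eq_zero_or_pos s with h | h
      · exact Or.inl h
      · right
        have hmin := Nat.find_min hex (show s - 1 < s by omega)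
        push_neg at hmin
        obtain ⟨t, ht1, ht2, ht3⟩ := hmin
        have hts : t = s - 1 := by
          by_contra hne
          have := hrun t (by omega) ht2
          omega
        subst hts
        have hst : s - 1 + 1 = s := by omega
        rw [hst] at ht3
        have hne : f (s-1) ≠ f s := fun hh => by
          have := hinj (s-1) (by omega) s (by omega) hh
          omega
        omega
    -- prefix bound
    have hpre : ∀ j, j < s → f j ≤ s - 1 := by
      intro j hj
      have hspos : 0 < s := by omega
      have hA : f (s-1) < f s := by rcases hasc with h | h; omega; exact h
      have hs1e : s - 1 < e := by omega
      have hIH := IH (s-1) hs1e (by omega) (by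
        right
        have hst : s - 1 + 1 = s := by omega
        rw [hst]; exact hA)
      obtain ⟨s', _, _, _, _, hall⟩ := hIH
      have := hall j (by omega)
      omega
    -- prefix surjectivity (for s > 0)
    have hpsurj : ∀ v, v < s → ∃ c, c < s ∧ f c = v := by
      intro v hv
      exact prefix_surj (fun i hi => by have := hpre i hi; omega)
        (fun i hi j hj hij => hinj i (by omega) j (by omega) hij) v hv
    have hsurj : ∀ v, v < n → ∃ c, c < n ∧ f c = v := prefix_surj hbd hinj
    have hrunval : ∀ j, s ≤ j → j ≤ e → f j = f e + (e - j) := by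
      intro j h1 h2
      exact run_formula hd he (e - j) j (by omega)
        (fun t ht1 ht2 => hrun t (by omega) ht2)
    have hge : s ≤ f e := by
      rcases Nat.eq_zero_or_pos s with h0 | hpos
      · omega
      · by_contra hlt
        push_neg at hlt
        obtain ⟨c, hc, hfc⟩ := hpsurj (f e) hlt
        have := hinj c (by omega) e he hfc
        omega
    have hle : f e ≤ s := by
      by_contra hgt
      push_neg at hgt
      obtain ⟨c, hc, hfc⟩ := hsurj s (by omega)
      have hc1 : ¬ c < s := fun h => by have := hpre c h; omega
      have hc2 : ¬ (s ≤ c ∧ c ≤ e) := by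
        rintro ⟨h1, h2⟩
        have := hrunval c h1 h2
        omega
      have hce : e < c := by omega
      have hasce : f e < f (e+1) := by
        rcases hre with h | h
        · omega
        · exact h
      obtain ⟨j, hj1, hj2, hj3⟩ := ivt hd (le_of_lt hasce) c (by omega) hc (by omega)
      have := hinj j (by omega) e he hj3
      omega
    refine ⟨s, hsle, by omega, hrun, hasc, ?_⟩
    intro j hj
    rcases lt_or_ge j s with h | h
    · have := hpre j h; omega
    · have := hrunval j h hj; omega

lemma drop1_unique {n : ℕ} {f g : ℕ → ℕ} (hdf : Drop1 n f) (hdg : Drop1 n g)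
    (hbf : ∀ i, i < n → f i < n) (hif : ∀ i, i < n → ∀ j, j < n → f i = f j → i = j)
    (hbg : ∀ i, i < n → g i < n) (hig : ∀ i, i < n → ∀ j, j < n → g i = g j → i = j)
    (hsame : ∀ i, i + 1 < n → (f (i+1) < f i ↔ g (i+1) < g i)) :
    ∀ i, i < n → f i = g i := by
  intro i hi
  have hex : ∃ t, i ≤ t ∧ (t + 1 = n ∨ f t < f (t+1)) :=
    ⟨n-1, by omega, Or.inl (by omega)⟩
  set e := Nat.find hex with he_def
  obtain ⟨hie, hre⟩ := Nat.find_spec hex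
  rw [← he_def] at hie hre
  have hen : e < n := by
    have : e ≤ n - 1 := Nat.find_le ⟨by omega, Or.inl (by omega)⟩
    omega
  have hrun_f : ∀ t, i ≤ t → t < e → f (t+1) < f t := by
    intro t ht1 ht2
    have hmin := Nat.find_min hex (he_def ▸ ht2)
    push_neg at hmin
    obtain ⟨h1, h2⟩ := hmin ht1
    have hne : f (t+1) ≠ f t := fun hh => by
      have := hif (t+1) (by omega) t (by omega) hh
      omega
    omega
  have hre_g : e + 1 = n ∨ g e < g (e+1) := by
    by_cases hn1 : e + 1 = n
    · exact Or.inl hn1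
    · right
      rcases hre with h | h
      · omega
      · have hiff := hsame e (by omega)
        have hne : g e ≠ g (e+1) := fun hh => by
          have := hig e (by omega) (e+1) (by omega) hh
          omega
        omega
  have hrun_g : ∀ t, i ≤ t → t < e → g (t+1) < g t := by
    intro t ht1 ht2
    exact (hsame t (by omega)).mp (hrun_f t ht1 ht2)
  have hre_f : e + 1 = n ∨ f e < f (e+1) := hre
  obtain ⟨sf, hsf1, hsf2, hsf3, hsf4, _⟩ := main_lem hdf hbf hif e hen hre_f
  obtain ⟨sg, hsg1, hsg2, hsg3, hsg4, _⟩ := main_lem hdg hbg hig e hen hre_g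
  have hseq : sf = sg := by
    by_contra hne
    rcases Nat.lt_or_ge sf sg with h | h
    · -- f-descent at sg-1, but g-ascent
      have hd1 : f (sg - 1 + 1) < f (sg - 1) := by
        have : sg - 1 + 1 = sg := by omega
        rw [this]
        have := hsf3 (sg - 1) (by omega) (by omega)
        have h2 : sg - 1 + 1 = sg := by omega
        rwa [h2] at this
      have hiff := hsame (sg - 1) (by omega)
      have hd2 := hiff.mp hd1
      have hA : g (sg - 1) < g sg := by
        rcases hsg4 with h0 | h0
        · omega
        · exact h0
      have h2 : sg - 1 + 1 = sg := by omega
      rw [h2] at hd2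
      omega
    · have hlt : sg < sf := by omega
      have hd1 : g (sf - 1 + 1) < g (sf - 1) := by
        have h2 : sf - 1 + 1 = sf := by omega
        rw [h2]
        have := hsg3 (sf - 1) (by omega) (by omega)
        rwa [h2] at this
      have hiff := hsame (sf - 1) (by omega)
      have hd2 := hiff.mpr hd1
      have hA : f (sf - 1) < f sf := by
        rcases hsf4 with h0 | h0
        · omega
        · exact h0
      have h2 : sf - 1 + 1 = sf := by omega
      rw [h2] at hd2
      omega
  have hf : f i = f e + (e - i) :=
    run_formula hdf hen (e - i) i (by omega) (fun t ht1 ht2 => hrun_f t (by omega) ht2)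
  have hg : g i = g e + (e - i) :=
    run_formula hdg hen (e - i) i (by omega) (fun t ht1 ht2 => hrun_g t (by omega) ht2)
  omega

lemma exists_drop1 (n : ℕ) (d : ℕ → Bool) :
    ∃ f : ℕ → ℕ, Drop1 n f ∧ (∀ i, i < n → f i < n) ∧
      (∀ i, i < n → ∀ j, j < n → f i = f j → i = j) ∧
      (∀ i, i + 1 < n → (f (i+1) < f i ↔ d i = true)) := by
  classical
  set D : ℕ → Bool := fun t => decide (t+1 < n) && d t with hD
  have hexE : ∀ i : ℕ, ∃ t, i ≤ t ∧ D t = false := by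
    intro i
    refine ⟨n + i, by omega, ?_⟩
    simp [hD]
    omega
  have hexS : ∀ i : ℕ, ∃ s, ∀ t, s ≤ t → t < i → D t = true :=
    fun i => ⟨i, fun t h1 h2 => absurd h2 (by omega)⟩
  set E : ℕ → ℕ := fun i => Nat.find (hexE i) with hE
  set S : ℕ → ℕ := fun i => Nat.find (hexS i) with hS
  have hile : ∀ i, i ≤ E i := fun i => (Nat.find_spec (hexE i)).1
  have hefalse : ∀ i, D (E i) = false := fun i => (Nat.find_spec (hexE i)).2
  have hetrue : ∀ i t, i ≤ t → t < E i → D t = true := by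
    intro i t h1 h2
    have := Nat.find_min (hexE i) (show t < E i from h2)
    by_contra hc
    simp only [Bool.not_eq_true] at hc
    exact this ⟨h1, hc⟩
  have hemax : ∀ i t, i ≤ t → D t = false → E i ≤ t := by
    intro i t h1 h2
    exact Nat.find_le ⟨h1, h2⟩
  have hsle : ∀ i, S i ≤ i := fun i => Nat.find_le (fun t h1 h2 => absurd h2 (by omega))
  have hstrue : ∀ i t, S i ≤ t → t < i → D t = true := fun i => Nat.find_spec (hexS i)
  have hsmin : ∀ i t, (∀ u, t ≤ u → u < i → D u = true) → S i ≤ t := by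
    intro i t h
    exact Nat.find_le h
  have hsnot : ∀ i t, t < S i → ¬ (∀ u, t ≤ u → u < i → D u = true) := by
    intro i t h
    exact Nat.find_min (hexS i) h
  have hbE : ∀ i, i < n → E i ≤ n - 1 := by
    intro i hi
    apply hemax i (n-1) (by omega)
    simp only [hD]
    simp only [Bool.and_eq_false_imp, decide_eq_true_eq]
    exact fun h => absurd h (by omega)
  set f : ℕ → ℕ := fun i => S i + E i - i with hf
  -- same-run lemma
  have hsame_run : ∀ i j, i ≤ j → (∀ t, i ≤ t → t < j → D t = true) → S i = S j ∧ E i = E j := by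
    intro i j hij hall
    constructor
    · apply le_antisymm
      · apply hsmin
        intro u h1 h2
        exact hstrue j u h1 (by omega)
      · apply hsmin
        intro u h1 h2
        rcases Nat.lt_or_ge u i with h | h
        · exact hstrue i u h1 h
        · exact hall u h h2
    · have hEij : j ≤ E i := by
        by_contra hc
        push_neg at hc
        have := hall (E i) (hile i) (by omega)
        rw [hefalse i] at this
        exact absurd this (by simp)
      exact le_antisymm (hemax i (E j) (le_trans hij (hile j)) (hefalse j))
        (hemax j (E i) hEij (hefalse i))
  have fact1 : ∀ i, D i = true → f i = f (i+1) + 1 := by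
    intro i hDi
    obtain ⟨hs, he⟩ := hsame_run i (i+1) (by omega) (by
      intro t h1 h2
      have : t = i := by omega
      rwa [this])
    have hEi : i + 1 ≤ E i := by
      have h1 := hefalse i
      have hne : E i ≠ i := fun hh => by rw [hh, hDi] at h1; simp at h1
      have := hile i
      omega
    have := hsle i
    simp only [hf]
    rw [← hs, ← he]
    omega
  have fact2 : ∀ i, D i = false → f i < f (i+1) := by
    intro i hDi
    have hE0 : E i = i := le_antisymm (hemax i i le_rfl hDi) (hile i)
    have hS1 : S (i+1) = i + 1 := by
      apply le_antisymm (hsle (i+1))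
      by_contra hc
      push_neg at hc
      have := hstrue (i+1) i (by omega) (by omega)
      rw [hDi] at this
      simp at this
    have h1 := hsle i
    have h2 := hile (i+1)
    simp only [hf]
    rw [hE0, hS1]
    omega
  have key : ∀ i j, i < j → j < n → f i ≠ f j := by
    intro i j hij hj
    by_cases hall : ∀ t, i ≤ t → t < j → D t = true
    · obtain ⟨hs, he⟩ := hsame_run i j (by omega) hall
      have h1 := hsle i
      have h2 := hile j
      simp only [hf]
      rw [hs, he]
      omega
    · push_neg at hall
      obtain ⟨t, h1, h2, h3⟩ := hall
      have hDt : D t = false := by simpa using h3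
      have hE : E i ≤ t := hemax i t h1 hDt
      have hSj : t + 1 ≤ S j := by
        by_contra hc
        push_neg at hc
        have := hstrue j t (by omega) h2
        rw [hDt] at this
        simp at this
      have h4 := hsle i
      have h5 := hile i
      have h6 := hile j
      simp only [hf]
      omega
  refine ⟨f, ?_, ?_, ?_, ?_⟩
  · -- Drop1
    intro i hi
    rcases Bool.eq_false_or_eq_true (D i) with h | h
    · have := fact1 i h; omega
    · have := fact2 i h; omega
  · intro i hi
    have := hbE i hi
    have := hsle i
    have := hile i
    simp only [hf]
    omega
  · intro i hi j hj hij
    by_contra hne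
    rcases Nat.lt_or_ge i j with h | h
    · exact key i j h hj hij
    · exact key j i (by omega) hi hij.symm
  · intro i hi
    have hDd : D i = d i := by simp [hD, hi]
    constructor
    · intro hlt
      by_contra hc
      have hDf : D i = false := by
        rw [hDd]; simpa using hc
      have := fact2 i hDf
      omega
    · intro hd2
      have := fact1 i (by rw [hDd]; exact hd2)
      omega

open Finset

/-- The list of values of a permutation of `Fin n` (0-based values). -/
def permList {n : ℕ} (π : Equiv.Perm (Fin n)) : List ℕ :=
  (List.finRange n).map fun i => (π i : ℕ)

/-- A sequence `w` of distinct integers contains the classical pattern `p`: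
some subsequence of `w` is order-isomorphic to `p`. -/
def SeqContains (w p : List ℕ) : Prop :=
  ∃ f : Fin p.length → Fin w.length, StrictMono f ∧
    ∀ i j : Fin p.length, p.get i < p.get j ↔ w.get (f i) < w.get (f j)

/-- A permutation avoids a classical pattern (given as the list of its values). -/
def AvoidsPat {n : ℕ} (π : Equiv.Perm (Fin n)) (p : List ℕ) : Prop :=
  ¬ SeqContains (permList π) p

/-- `π` is a Fishburn permutation: it avoids the bivincular pattern (231,{1},{1}),
i.e. there are no positions `i < k` with `π i = π k + 1` and `π i < π (i+1)`
(0-based values, so `π i = π k + 1` encodes `π(i) > 1` and `π(k) = π(i) - 1`). -/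
def IsFishburn {n : ℕ} (π : Equiv.Perm (Fin n)) : Prop :=
  ∀ i k : ℕ, ∀ hi : i < n, ∀ hk : k < n, ∀ _hik : i < k,
    (π ⟨i, hi⟩ : ℕ) = (π ⟨k, hk⟩ : ℕ) + 1 →
    ¬ ((π ⟨i, hi⟩ : ℕ) < (π ⟨i + 1, by omega⟩ : ℕ))

/-- A permutation is indecomposable if it is not the direct sum of two nonempty
permutations, i.e. no proper nonempty initial segment of positions maps onto the
corresponding initial segment of values. -/
def IsIndecomposable {n : ℕ} (π : Equiv.Perm (Fin n)) : Prop :=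
  ¬ ∃ k : ℕ, 0 < k ∧ k < n ∧ ∀ i : Fin n, (i : ℕ) < k → (π i : ℕ) < k

def fOf {n : ℕ} (π : Equiv.Perm (Fin n)) : ℕ → ℕ :=
  fun i => if h : i < n then (π ⟨i, h⟩ : ℕ) else 0

lemma fOf_eq {n : ℕ} (π : Equiv.Perm (Fin n)) {i : ℕ} (h : i < n) :
    fOf π i = (π ⟨i, h⟩ : ℕ) := dif_pos h

lemma fOf_bd {n : ℕ} (π : Equiv.Perm (Fin n)) : ∀ i, i < n → fOf π i < n := by
  intro i hi
  rw [fOf_eq π hi]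
  exact (π ⟨i, hi⟩).2

lemma fOf_inj {n : ℕ} (π : Equiv.Perm (Fin n)) :
    ∀ i, i < n → ∀ j, j < n → fOf π i = fOf π j → i = j := by
  intro i hi j hj h
  rw [fOf_eq π hi, fOf_eq π hj] at h
  have := π.injective (Fin.ext h)
  exact congrArg Fin.val this

lemma fOf_surj {n : ℕ} (π : Equiv.Perm (Fin n)) :
    ∀ v, v < n → ∃ c, c < n ∧ fOf π c = v := by
  intro v hv
  refine ⟨(π.symm ⟨v, hv⟩ : Fin n).val, (π.symm ⟨v, hv⟩).2, ?_⟩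
  rw [fOf_eq π (π.symm ⟨v, hv⟩).2]
  simp

lemma permList_get {n : ℕ} (π : Equiv.Perm (Fin n)) {i : ℕ}
    (h : i < (permList π).length) (h2 : i < n) :
    (permList π).get ⟨i, h⟩ = fOf π i := by
  rw [fOf_eq π h2]
  simp [permList]

lemma permList_len {n : ℕ} (π : Equiv.Perm (Fin n)) : (permList π).length = n := by
  simp [permList]

lemma contains_of {n : ℕ} (π : Equiv.Perm (Fin n)) {a b c : ℕ}
    (hab : a < b) (hbc : b < c) (hc : c < n)
    (h1 : fOf π b < fOf π c) (h2 : fOf π c < fOf π a) :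
    SeqContains (permList π) [3, 1, 2] := by
  have hlen := permList_len π
  have ha' : a < (permList π).length := by omega
  have hb' : b < (permList π).length := by omega
  have hc' : c < (permList π).length := by omega
  have hp3 : ([3, 1, 2] : List ℕ).length = 3 := rfl
  refine ⟨fun i => if (i : ℕ) = 0 then ⟨a, ha'⟩ else if (i : ℕ) = 1 then ⟨b, hb'⟩
    else ⟨c, hc'⟩, ?_, ?_⟩
  · intro i j hij
    have hi3 : (i : ℕ) < 3 := by have := i.2; omega
    have hj3 : (j : ℕ) < 3 := by have := j.2; omega
    have hij' : (i : ℕ) < (j : ℕ) := hij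
    simp only [Fin.lt_def]
    interval_cases hi : (i : ℕ) <;> interval_cases hj : (j : ℕ) <;> simp <;> omega
  · have ga := permList_get π ha' (by omega)
    have gb := permList_get π hb' (by omega)
    have gc := permList_get π hc' (by omega)
    intro i j
    have hi3 : (i : ℕ) < 3 := by have := i.2; omega
    have hj3 : (j : ℕ) < 3 := by have := j.2; omega
    have hgeti : ∀ m : Fin ([3,1,2] : List ℕ).length, ([3,1,2] : List ℕ).get m =
        if (m : ℕ) = 0 then 3 else if (m : ℕ) = 1 then 1 else 2 := by
      intro m
      have hm3 : (m : ℕ) < 3 := by have := m.2; omega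
      interval_cases hm : (m : ℕ) <;> simp_all [List.get]
    rw [hgeti i, hgeti j]
    interval_cases hi : (i : ℕ) <;> interval_cases hj : (j : ℕ) <;>
      simp_all <;> omega

lemma of_contains {n : ℕ} (π : Equiv.Perm (Fin n))
    (h : SeqContains (permList π) [3, 1, 2]) :
    ∃ a b c, a < b ∧ b < c ∧ c < n ∧ fOf π b < fOf π c ∧ fOf π c < fOf π a := by
  obtain ⟨F, hmono, hiff⟩ := h
  have hlen := permList_len π
  set i0 : Fin ([3,1,2] : List ℕ).length := ⟨0, by norm_num⟩
  set i1 : Fin ([3,1,2] : List ℕ).length := ⟨1, by norm_num⟩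
  set i2 : Fin ([3,1,2] : List ℕ).length := ⟨2, by norm_num⟩
  refine ⟨(F i0).val, (F i1).val, (F i2).val, ?_, ?_, ?_, ?_, ?_⟩
  · exact hmono (show i0 < i1 by simp [i0, i1, Fin.lt_def])
  · exact hmono (show i1 < i2 by simp [i1, i2, Fin.lt_def])
  · have := (F i2).2; omega
  · have h12 := (hiff i1 i2).mp (by simp [i1, i2, List.get])
    have g1 := permList_get π (F i1).2 (by have := (F i1).2; omega)
    have g2 := permList_get π (F i2).2 (by have := (F i2).2; omega)
    rw [← g1, ← g2]
    simpa using h12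
  · have h20 := (hiff i2 i0).mp (by simp [i2, i0, List.get])
    have g0 := permList_get π (F i0).2 (by have := (F i0).2; omega)
    have g2 := permList_get π (F i2).2 (by have := (F i2).2; omega)
    rw [← g0, ← g2]
    simpa using h20

lemma charac {n : ℕ} (π : Equiv.Perm (Fin n)) :
    (IsFishburn π ∧ AvoidsPat π [3, 1, 2]) ↔ Drop1 n (fOf π) := by
  constructor
  · rintro ⟨hF, hA⟩ i hi
    by_contra hbad
    push_neg at hbad
    have hdrop : fOf π (i+1) + 2 ≤ fOf π i := hbad
    have hvn : fOf π (i+1) + 1 < n := by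
      have := fOf_bd π i (by omega)
      omega
    obtain ⟨m, hm, hfm⟩ := fOf_surj π (fOf π (i+1) + 1) hvn
    have hmi : m ≠ i := fun h => by rw [h] at hfm; omega
    have hmi1 : m ≠ i + 1 := fun h => by rw [h] at hfm; omega
    rcases Nat.lt_or_ge m i with hlt | hge
    · -- m < i : use Fishburn at (m, i+1) then 312 at (m, m+1, i+1)
      have heq : (π ⟨m, hm⟩ : ℕ) = (π ⟨i+1, hi⟩ : ℕ) + 1 := by
        rw [← fOf_eq π hm, ← fOf_eq π hi]
        omega
      have hnasc := hF m (i+1) hm hi (by omega) heq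
      have hdesc : fOf π (m+1) < fOf π m := by
        have h1 : ¬ (fOf π m < fOf π (m+1)) := by
          rw [fOf_eq π hm, fOf_eq π (show m + 1 < n by omega)]
          exact hnasc
        have hne : fOf π (m+1) ≠ fOf π m := fun hh =>
          by have := fOf_inj π (m+1) (by omega) m (by omega) hh; omega
        omega
      have hm1i : m + 1 ≠ i + 1 := by omega
      rcases Nat.eq_or_lt_of_le (show m + 1 ≤ i by omega) with he | hlt2
      · rw [he] at hdesc; omega
      · have hne2 : fOf π (m+1) ≠ fOf π (i+1) := fun hh =>
          by have := fOf_inj π (m+1) (by omega) (i+1) hi hh; omega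
        exact hA (contains_of π (show m < m+1 by omega) (show m+1 < i+1 by omega) hi
          (by omega) (by omega))
    · have hgt : i + 1 < m := by omega
      exact hA (contains_of π (show i < i+1 by omega) hgt hm (by omega) (by omega))
  · intro hd
    constructor
    · intro i k hi hk hik heq hasc
      have hfik : fOf π i = fOf π k + 1 := by
        rw [fOf_eq π hi, fOf_eq π hk]; exact heq
      have hasc' : fOf π i ≤ fOf π (i+1) := by
        rw [fOf_eq π hi, fOf_eq π (show i + 1 < n by omega)]
        omega
      obtain ⟨j, hj1, hj2, hj3⟩ := ivt hd hasc' k (by omega) hk (by omega)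
      have := fOf_inj π j (by omega) i hi hj3
      omega
    · intro hcon
      obtain ⟨a, b, c, hab, hbc, hc, h1, h2⟩ := of_contains π hcon
      obtain ⟨j, hj1, hj2, hj3⟩ := ivt hd (le_of_lt h2) b (by omega) (by omega) (by omega)
      have := fOf_inj π j (by omega) c hc hj3
      omega

theorem stmt4 (n : ℕ) (hn : 1 ≤ n) :
    Nat.card {π : Equiv.Perm (Fin n) // IsFishburn π ∧ AvoidsPat π [3, 1, 2]} =
      2 ^ (n - 1) := by
  classical
  set T := {π : Equiv.Perm (Fin n) // IsFishburn π ∧ AvoidsPat π [3, 1, 2]} with hT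
  set dm : T → (Fin (n-1) → Bool) :=
    fun π t => decide (fOf π.1 (t.val + 1) < fOf π.1 t.val) with hdm
  have hbij : Function.Bijective dm := by
    constructor
    · rintro ⟨π, hπ⟩ ⟨σ, hσ⟩ h
      have hdπ := (charac π).mp hπ
      have hdσ := (charac σ).mp hσ
      have hsame : ∀ i, i + 1 < n → (fOf π (i+1) < fOf π i ↔ fOf σ (i+1) < fOf σ i) := by
        intro i hi
        have := congrFun h ⟨i, by omega⟩
        simp only [hdm] at this
        exact decide_eq_decide.mp this
      have huniq := drop1_unique hdπ hdσ (fOf_bd π) (fOf_inj π) (fOf_bd σ) (fOf_inj σ) hsame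
      apply Subtype.ext
      apply Equiv.ext
      intro x
      apply Fin.ext
      have := huniq x.val x.2
      rw [fOf_eq π x.2, fOf_eq σ x.2] at this
      simpa using this
    · intro dvec
      obtain ⟨f, hdf, hbd, hinj, hiff⟩ :=
        exists_drop1 n (fun t => if h : t < n - 1 then dvec ⟨t, h⟩ else false)
      have hGinj : Function.Injective (fun x : Fin n => (⟨f x, hbd x x.2⟩ : Fin n)) := by
        intro x y hxy
        exact Fin.ext (hinj x x.2 y y.2 (by simpa using congrArg Fin.val hxy))
      set π : Equiv.Perm (Fin n) :=
        Equiv.ofBijective _ (Finite.injective_iff_bijective.mp hGinj) with hπ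
      have hfOf : ∀ i, i < n → fOf π i = f i := by
        intro i hi
        rw [fOf_eq π hi]
        rfl
      have hdπ : Drop1 n (fOf π) := by
        intro i hi
        rw [hfOf i (by omega), hfOf (i+1) hi]
        exact hdf i hi
      refine ⟨⟨π, (charac π).mpr hdπ⟩, ?_⟩
      funext t
      have ht : t.val + 1 < n := by have := t.2; omega
      have hi := hiff t.val ht
      rw [dif_pos t.2, Fin.eta] at hi
      simp only [hdm, hfOf t.val (by omega), hfOf (t.val+1) ht]
      cases hb : dvec t
      · simp [hb] at hi
        simpa using hi
      · simp [hb] at hi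
        simpa using hi
  rw [Nat.card_eq_of_bijective dm hbij]
  simp [Nat.card_eq_fintype_card]
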